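/- Let I, K ⊆ Π. The set Γ(I,K) := Φ_I ∪ (Φ⁺ \ Φ_K) is invertible, i.e. both Γ(I,K) and Φ \ Γ(I,K) are closed subsets of Φ, if and only if I is orthogonal to K \ I. -/

import Mathlib

variable {V : Type*} [NormedAddCommGroup V] [InnerProductSpace ℝ V]

/-- `Φ` is a finite reduced crystallographic root system spanning `V`. -/
structure IsRootSystem (Φ : Set V) : Prop where
  finite : Φ.Finite
  zero_not_mem : (0 : V) ∉ Φ
  span_top : Submodule.span ℝ Φ = ⊤
  reduced : ∀ α ∈ Φ, ∀ c : ℝ, c • α ∈ Φ → c = 1 ∨ c = -1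
  crystallographic : ∀ α ∈ Φ, ∀ β ∈ Φ,
    ∃ n : ℤ, 2 * (inner ℝ β α : ℝ) / (inner ℝ α α : ℝ) = (n : ℝ)
  reflect_mem : ∀ α ∈ Φ, ∀ β ∈ Φ,
    β - (2 * (inner ℝ β α : ℝ) / (inner ℝ α α : ℝ)) • α ∈ Φ

/-- `α` is a nonnegative linear combination of elements of `Δ`. -/
def IsNonnegComb (Δ : Set V) (α : V) : Prop :=
  ∃ c : V →₀ ℝ, (c.support : Set V) ⊆ Δ ∧ (∀ v, 0 ≤ c v) ∧ α = c.sum fun v r => r • v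

/-- `Δ` is a base (set of simple roots) of the root system `Φ`. -/
structure IsBase (Φ Δ : Set V) : Prop where
  subset : Δ ⊆ Φ
  indep : LinearIndependent ℝ (Subtype.val : Δ → V)
  pos_or_neg : ∀ α ∈ Φ, IsNonnegComb Δ α ∨ IsNonnegComb Δ (-α)

/-- The set of positive roots with respect to the base `Δ`. -/
def posRoots (Φ Δ : Set V) : Set V := {α ∈ Φ | IsNonnegComb Δ α}

/-- The set of negative roots with respect to the base `Δ`. -/
def negRoots (Φ Δ : Set V) : Set V := {α ∈ Φ | IsNonnegComb Δ (-α)}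

/-- `Φ_A := Φ ∩ span A`. -/
def rootsIn (Φ A : Set V) : Set V := Φ ∩ (Submodule.span ℝ A : Set V)

/-- `Φ_A⁺`. -/
def posRootsIn (Φ Δ A : Set V) : Set V := rootsIn Φ A ∩ posRoots Φ Δ

/-- `Φ_A⁻`. -/
def negRootsIn (Φ Δ A : Set V) : Set V := rootsIn Φ A ∩ negRoots Φ Δ

/-- `Γ` is a closed subset of `Φ`. -/
def IsClosedSubset (Φ Γ : Set V) : Prop := ∀ α ∈ Γ, ∀ β ∈ Γ, α + β ∈ Φ → α + β ∈ Γ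

/-- `X` and `Y` are orthogonal sets of vectors. -/
def OrthogonalSets (X Y : Set V) : Prop := ∀ α ∈ X, ∀ β ∈ Y, (inner ℝ α β : ℝ) = 0

/-!
Coordinates with respect to the base turn the question into sign bookkeeping: every root has all
its coefficients of one sign, and it lies in `span A` (for `A ⊆ Π`) iff its support lies in `A`.

If `a ∈ I` and `b ∈ K \ I` are not orthogonal, then `⟪a, b⟫ < 0`, so `a + b` is a root; now
`-(a + b)` and `b` lie outside `Γ(I,K)` while their sum `-a` lies in `Φ_I`.

Conversely, if `I ⟂ K \ I`, every root in `span (I ∪ K)` lies in `span I` or in `span (K \ I)`: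
subtracting from a positive counterexample a simple root `a` with `⟪β, a⟫ > 0` gives a
counterexample of smaller height, or a root with coefficients of both signs. Hence
`Γ(I,K) = Φ_I ∪ (Φ⁺ \ Φ_{I ∪ K})` and its complement is `Φ_{K \ I} ∪ (Φ⁻ \ Φ_{I ∪ K})`. A set
`Φ_A ∪ (Φ^± \ Φ_B)` with `A ⊆ B` is closed, because a nonzero coefficient outside `B` survives
the addition of a root of the same sign or of a root in `Φ_B`.
-/

open Module Submodule

section

variable {Φ Δ A B I K J₁ J₂ : Set V} {α β : V}

theorem rootsIn_mono (h : A ⊆ B) : rootsIn Φ A ⊆ rootsIn Φ B :=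
  Set.inter_subset_inter_right _ (span_mono h)

theorem OrthogonalSets.symm (h : OrthogonalSets A B) : OrthogonalSets B A :=
  fun β hβ α hα => by rw [real_inner_comm]; exact h α hα β hβ

theorem OrthogonalSets.inner_eq_zero (h : OrthogonalSets A B) (hα : α ∈ span ℝ A)
    (hβ : β ∈ span ℝ B) : inner ℝ α β = 0 :=
  (isOrtho_span.2 fun u hu v hv => h u hu v hv).inner_eq hα hβ

theorem IsNonnegComb.mem_span (h : IsNonnegComb Δ α) : α ∈ span ℝ Δ := by
  obtain ⟨c, hc, -, rfl⟩ := h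
  exact mem_span_set.2 ⟨c, hc, rfl⟩

theorem isClosedSubset_rootsIn_union_diff {P : Set V} (hAB : A ⊆ B)
    (hP : ∀ α ∈ P \ rootsIn Φ B, ∀ β ∈ P ∪ rootsIn Φ B, α + β ∈ Φ → α + β ∈ P \ rootsIn Φ B) :
    IsClosedSubset Φ (rootsIn Φ A ∪ (P \ rootsIn Φ B)) := by
  rintro α (hα | hα) β (hβ | hβ) hαβ
  · exact Or.inl ⟨hαβ, add_mem hα.2 hβ.2⟩
  · rw [add_comm] at hαβ ⊢
    exact Or.inr (hP β hβ α (Or.inr (rootsIn_mono hAB hα)) hαβ)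
  · exact Or.inr (hP α hα β (Or.inr (rootsIn_mono hAB hβ)) hαβ)
  · exact Or.inr (hP α hα β (Or.inl hβ.1) hαβ)

namespace IsRootSystem

variable (hΦ : IsRootSystem Φ)
include hΦ

theorem ne_zero (hα : α ∈ Φ) : α ≠ 0 :=
  fun h => hΦ.zero_not_mem (h ▸ hα)

theorem neg_mem (hα : α ∈ Φ) : -α ∈ Φ := by
  have h := hΦ.reflect_mem α hα α hα
  rwa [mul_div_assoc, div_self (real_inner_self_pos.2 (hΦ.ne_zero hα)).ne', mul_one, two_smul,
    sub_add_cancel_left] at h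

/-- The Cartan integers `n, m` of `α, β` are negative, and `n, m ≤ -2` would force
`‖α + β‖² ≤ 0`; so one of them is `-1`, and the corresponding reflection is `α + β`. -/
theorem add_mem_of_inner_neg (hα : α ∈ Φ) (hβ : β ∈ Φ) (hαβ : inner ℝ α β < 0)
    (hne : α + β ≠ 0) : α + β ∈ Φ := by
  have hαα : 0 < inner ℝ α α := real_inner_self_pos.2 (hΦ.ne_zero hα)
  have hββ : 0 < inner ℝ β β := real_inner_self_pos.2 (hΦ.ne_zero hβ)
  obtain ⟨n, hn⟩ := hΦ.crystallographic α hα β hβ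
  obtain ⟨m, hm⟩ := hΦ.crystallographic β hβ α hα
  have hn' : 2 * inner ℝ α β = n * inner ℝ α α := by rw [real_inner_comm, ← hn]; field_simp
  have hm' : 2 * inner ℝ α β = m * inner ℝ β β := by rw [← hm]; field_simp
  have hn0 : n < 0 := by exact_mod_cast (show (n : ℝ) < 0 by nlinarith)
  have hm0 : m < 0 := by exact_mod_cast (show (m : ℝ) < 0 by nlinarith)
  have hnm : n = -1 ∨ m = -1 := by
    by_contra! h
    have hn2 : (n : ℝ) ≤ -2 := by exact_mod_cast (show n ≤ -2 by omega)
    have hm2 : (m : ℝ) ≤ -2 := by exact_mod_cast (show m ≤ -2 by omega)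
    refine hne (real_inner_self_nonpos.1 ?_)
    rw [inner_add_add_self, real_inner_comm α β]
    nlinarith
  rcases hnm with rfl | rfl
  · have h := hΦ.reflect_mem α hα β hβ
    rwa [hn, Int.cast_neg, Int.cast_one, neg_one_smul, sub_neg_eq_add, add_comm] at h
  · have h := hΦ.reflect_mem β hβ α hα
    rwa [hm, Int.cast_neg, Int.cast_one, neg_one_smul, sub_neg_eq_add] at h

end IsRootSystem

namespace IsBase

noncomputable def basis (hΔ : IsBase Φ Δ) (hspan : span ℝ Φ = ⊤) : Basis Δ ℝ V :=
  Basis.mk hΔ.indep <| by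
    rw [Subtype.range_coe, ← hspan, span_le]
    intro α hα
    rcases hΔ.pos_or_neg α hα with h | h
    · exact h.mem_span
    · simpa using h.mem_span

section

variable (hΔ : IsBase Φ Δ) (hspan : span ℝ Φ = ⊤)

@[simp]
theorem coe_basis : ⇑(hΔ.basis hspan) = Subtype.val :=
  Basis.coe_mk _ _

theorem repr_coe (i : Δ) : (hΔ.basis hspan).repr i = Finsupp.single i 1 := by
  simpa using (hΔ.basis hspan).repr_self i

theorem repr_nonneg (hα : IsNonnegComb Δ α) (i : Δ) : 0 ≤ (hΔ.basis hspan).repr α i := by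
  obtain ⟨c, hcΔ, hc, rfl⟩ := hα
  have : (c.sum fun v r => r • v) =
      Finsupp.linearCombination ℝ (hΔ.basis hspan) (c.subtypeDomain (· ∈ Δ)) := by
    rw [Finsupp.linearCombination_apply, coe_basis]
    exact (Finsupp.sum_subtypeDomain_index fun v hv => hcΔ hv).symm
  rw [this, Basis.repr_linearCombination, Finsupp.subtypeDomain_apply]
  exact hc i

theorem mem_span_iff (hA : A ⊆ Δ) :
    α ∈ span ℝ A ↔ ∀ i, (hΔ.basis hspan).repr α i ≠ 0 → (i : V) ∈ A := by
  have hA' : A = hΔ.basis hspan '' (Subtype.val ⁻¹' A) := by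
    rw [coe_basis, Subtype.image_preimage_coe, Set.inter_eq_right.2 hA]
  conv_lhs => rw [hA']
  simp only [Basis.mem_span_image, Set.subset_def, Finset.mem_coe, Finsupp.mem_support_iff,
    Set.mem_preimage]

include hΔ hspan in
theorem coe_mem_span_iff (hA : A ⊆ Δ) (i : Δ) : (i : V) ∈ span ℝ A ↔ (i : V) ∈ A :=
  ⟨fun h => (hΔ.mem_span_iff hspan hA).1 h i (by simp [repr_coe]), fun h => subset_span h⟩

end

section

variable (hΦ : IsRootSystem Φ) (hΔ : IsBase Φ Δ)
include hΦ hΔ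

theorem repr_nonpos (hα : α ∈ negRoots Φ Δ) (i : Δ) : (hΔ.basis hΦ.span_top).repr α i ≤ 0 := by
  simpa using hΔ.repr_nonneg hΦ.span_top hα.2 i

theorem mem_posRoots_of_repr_pos (hα : α ∈ Φ) {i : Δ} (hi : 0 < (hΔ.basis hΦ.span_top).repr α i) :
    α ∈ posRoots Φ Δ := by
  refine (hΔ.pos_or_neg α hα).elim (fun h => ⟨hα, h⟩) fun h => ?_
  exact absurd (hΔ.repr_nonpos hΦ ⟨hα, h⟩ i) hi.not_ge

theorem exists_repr_ne_zero (hα : α ∈ Φ) : ∃ i, (hΔ.basis hΦ.span_top).repr α i ≠ 0 := by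
  by_contra! h
  exact hΦ.ne_zero hα ((hΔ.basis hΦ.span_top).repr.map_eq_zero_iff.1 (Finsupp.ext h))

theorem disjoint_posRoots_negRoots : Disjoint (posRoots Φ Δ) (negRoots Φ Δ) := by
  refine Set.disjoint_left.2 fun α hpos hneg => ?_
  obtain ⟨i, hi⟩ := hΔ.exists_repr_ne_zero hΦ hpos.1
  exact hi (le_antisymm (hΔ.repr_nonpos hΦ hneg i) (hΔ.repr_nonneg hΦ.span_top hpos.2 i))

theorem disjoint_rootsIn (hA : A ⊆ Δ) (hB : B ⊆ Δ) (hAB : Disjoint A B) :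
    Disjoint (rootsIn Φ A) (rootsIn Φ B) := by
  refine Set.disjoint_left.2 fun α hαA hαB => ?_
  obtain ⟨i, hi⟩ := hΔ.exists_repr_ne_zero hΦ hαA.1
  exact Set.disjoint_left.1 hAB ((hΔ.mem_span_iff hΦ.span_top hA).1 hαA.2 i hi)
    ((hΔ.mem_span_iff hΦ.span_top hB).1 hαB.2 i hi)

theorem inner_coe_nonpos {i j : Δ} (hij : i ≠ j) : inner ℝ (i : V) j ≤ 0 := by
  by_contra! h
  have hsub : (i : V) - j ∈ Φ := by
    rw [sub_eq_add_neg]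
    refine hΦ.add_mem_of_inner_neg (hΔ.subset i.2) (hΦ.neg_mem (hΔ.subset j.2))
      (by rw [inner_neg_right]; linarith) ?_
    rw [← sub_eq_add_neg, sub_ne_zero]
    exact fun h => hij (Subtype.ext h)
  have hpos := hΔ.mem_posRoots_of_repr_pos hΦ hsub (i := i) (by simp [repr_coe, hij])
  have := hΔ.repr_nonneg hΦ.span_top hpos.2 j
  norm_num [repr_coe, hij.symm] at this

theorem exists_repr_ne_zero_inner_pos (hβ : β ∈ posRoots Φ Δ) :
    ∃ i, (hΔ.basis hΦ.span_top).repr β i ≠ 0 ∧ 0 < inner ℝ β (i : V) := by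
  set b := hΔ.basis hΦ.span_top
  by_contra! h
  refine hΦ.ne_zero hβ.1 (real_inner_self_nonpos.1 ?_)
  nth_rw 2 [← b.linearCombination_repr β]
  rw [Finsupp.linearCombination_apply, Finsupp.sum, inner_sum]
  refine Finset.sum_nonpos fun i hi => ?_
  rw [real_inner_smul_right, coe_basis]
  exact mul_nonpos_of_nonneg_of_nonpos (hΔ.repr_nonneg hΦ.span_top hβ.2 i)
    (h i (Finsupp.mem_support_iff.1 hi))

theorem sub_mem_posRoots_of_inner_pos (hJ₁ : J₁ ⊆ Δ) (hJ₂ : J₂ ⊆ Δ)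
    (horth : OrthogonalSets J₁ J₂) (hβ : β ∈ posRoots Φ Δ) (hβ₁ : β ∉ span ℝ J₁)
    (hβ₂ : β ∉ span ℝ J₂) {a : Δ} (ha : (a : V) ∈ J₁) (hβa : 0 < inner ℝ β (a : V)) :
    β - a ∈ posRoots Φ Δ ∧ β - a ∉ span ℝ J₁ ∧ β - a ∉ span ℝ J₂ := by
  set b := hΔ.basis hΦ.span_top
  have haΦ : (a : V) ∈ Φ := hΔ.subset a.2
  obtain ⟨i, hi, hiJ₁⟩ : ∃ i, b.repr β i ≠ 0 ∧ (i : V) ∉ J₁ := by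
    simpa [hΔ.mem_span_iff hΦ.span_top hJ₁] using hβ₁
  have hia : i ≠ a := fun h => hiJ₁ (h ▸ ha)
  have hβi : 0 < b.repr β i := (hΔ.repr_nonneg hΦ.span_top hβ.2 i).lt_of_ne' hi
  have hβai : b.repr (β - a) i = b.repr β i := by simp [b, repr_coe, hia]
  have hβaΦ : β - a ∈ Φ := by
    rw [sub_eq_add_neg]
    refine hΦ.add_mem_of_inner_neg hβ.1 (hΦ.neg_mem haΦ) (by rw [inner_neg_right]; linarith) ?_
    rw [← sub_eq_add_neg, sub_ne_zero]
    rintro rfl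
    exact hβ₁ (subset_span ha)
  refine ⟨hΔ.mem_posRoots_of_repr_pos hΦ hβaΦ (hβai ▸ hβi),
    fun h => hiJ₁ ((hΔ.mem_span_iff hΦ.span_top hJ₁).1 h i (hβai ▸ hi)), fun h => ?_⟩
  -- `a ⟂ β - a` makes the reflection of `β` in `a` equal to `β - 2a`, a root with coefficient
  -- `-1` at `a` and a positive coefficient at `i`.
  have haJ₂ : (a : V) ∉ J₂ := fun h' => hΦ.ne_zero haΦ (inner_self_eq_zero.1 (horth _ ha _ h'))
  have hinner : inner ℝ β (a : V) = inner ℝ (a : V) a := by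
    have := horth.inner_eq_zero (subset_span ha) h
    rw [inner_sub_right, real_inner_comm] at this
    linarith
  have hrefl : β - a - a ∈ Φ := by
    have := hΦ.reflect_mem a haΦ β hβ.1
    rwa [hinner, mul_div_assoc, div_self (real_inner_self_pos.2 (hΦ.ne_zero haΦ)).ne', mul_one,
      two_smul, ← sub_sub] at this
  have hβaa : b.repr (β - a) a = 0 := by
    by_contra hne
    exact haJ₂ ((hΔ.mem_span_iff hΦ.span_top hJ₂).1 h a hne)
  have hpos := hΔ.mem_posRoots_of_repr_pos hΦ hrefl (i := i) (by simpa [b, repr_coe, hia] using hβi)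
  have := hΔ.repr_nonneg hΦ.span_top hpos.2 a
  rw [map_sub, Finsupp.sub_apply, hβaa, repr_coe] at this
  norm_num at this

theorem mem_span_or_mem_span_of_mem_posRoots (hJ₁ : J₁ ⊆ Δ) (hJ₂ : J₂ ⊆ Δ)
    (horth : OrthogonalSets J₁ J₂) (hβ : β ∈ posRoots Φ Δ) (hsp : β ∈ span ℝ (J₁ ∪ J₂)) :
    β ∈ span ℝ J₁ ∨ β ∈ span ℝ J₂ := by
  set b := hΔ.basis hΦ.span_top
  set S := {γ ∈ posRoots Φ Δ | γ ∈ span ℝ (J₁ ∪ J₂) ∧ γ ∉ span ℝ J₁ ∧ γ ∉ span ℝ J₂}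
  by_contra! h
  obtain ⟨γ, ⟨hγ, hγsp, hγ₁, hγ₂⟩, hmin⟩ :=
    S.exists_min_image b.sumCoords (hΦ.finite.subset fun γ h => h.1.1) ⟨β, hβ, hsp, h⟩
  obtain ⟨a, ha, hγa⟩ := hΔ.exists_repr_ne_zero_inner_pos hΦ hγ
  have haJ : (a : V) ∈ J₁ ∪ J₂ :=
    (hΔ.mem_span_iff hΦ.span_top (Set.union_subset hJ₁ hJ₂)).1 hγsp a ha
  have hsub : γ - a ∈ S := by
    have hsp' : γ - a ∈ span ℝ (J₁ ∪ J₂) := sub_mem hγsp (subset_span haJ)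
    rcases haJ with haJ | haJ
    · obtain ⟨h₁, h₂, h₃⟩ :=
        hΔ.sub_mem_posRoots_of_inner_pos hΦ hJ₁ hJ₂ horth hγ hγ₁ hγ₂ haJ hγa
      exact ⟨h₁, hsp', h₂, h₃⟩
    · obtain ⟨h₁, h₂, h₃⟩ :=
        hΔ.sub_mem_posRoots_of_inner_pos hΦ hJ₂ hJ₁ horth.symm hγ hγ₂ hγ₁ haJ hγa
      exact ⟨h₁, hsp', h₃, h₂⟩
  have := hmin _ hsub
  rw [map_sub, show (a : V) = b a by simp [b], b.sumCoords_self_apply] at this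
  linarith

theorem mem_span_or_mem_span_of_orthogonalSets (hJ₁ : J₁ ⊆ Δ) (hJ₂ : J₂ ⊆ Δ)
    (horth : OrthogonalSets J₁ J₂) (hβ : β ∈ Φ) (hsp : β ∈ span ℝ (J₁ ∪ J₂)) :
    β ∈ span ℝ J₁ ∨ β ∈ span ℝ J₂ := by
  rcases hΔ.pos_or_neg β hβ with h | h
  · exact hΔ.mem_span_or_mem_span_of_mem_posRoots hΦ hJ₁ hJ₂ horth ⟨hβ, h⟩ hsp
  · simpa only [neg_mem_iff] using hΔ.mem_span_or_mem_span_of_mem_posRoots hΦ hJ₁ hJ₂ horth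
      ⟨hΦ.neg_mem hβ, h⟩ (neg_mem hsp)

theorem add_mem_posRoots_diff_rootsIn (hB : B ⊆ Δ) (hα : α ∈ posRoots Φ Δ \ rootsIn Φ B)
    (hβ : β ∈ posRoots Φ Δ ∪ rootsIn Φ B) (hαβ : α + β ∈ Φ) :
    α + β ∈ posRoots Φ Δ \ rootsIn Φ B := by
  set b := hΔ.basis hΦ.span_top
  obtain ⟨i, hi, hiB⟩ : ∃ i, b.repr α i ≠ 0 ∧ (i : V) ∉ B := by
    simpa [hΔ.mem_span_iff hΦ.span_top hB] using fun h => hα.2 ⟨hα.1.1, h⟩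
  have hαi : 0 < b.repr α i := (hΔ.repr_nonneg hΦ.span_top hα.1.2 i).lt_of_ne' hi
  have hβi : 0 ≤ b.repr β i := by
    rcases hβ with hβ | hβ
    · exact hΔ.repr_nonneg hΦ.span_top hβ.2 i
    · by_contra! h
      exact hiB ((hΔ.mem_span_iff hΦ.span_top hB).1 hβ.2 i h.ne)
  have hαβi : 0 < b.repr (α + β) i := by rw [map_add, Finsupp.add_apply]; linarith
  exact ⟨hΔ.mem_posRoots_of_repr_pos hΦ hαβ hαβi,
    fun h => hiB ((hΔ.mem_span_iff hΦ.span_top hB).1 h.2 i hαβi.ne')⟩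

theorem add_mem_negRoots_diff_rootsIn (hB : B ⊆ Δ) (hα : α ∈ negRoots Φ Δ \ rootsIn Φ B)
    (hβ : β ∈ negRoots Φ Δ ∪ rootsIn Φ B) (hαβ : α + β ∈ Φ) :
    α + β ∈ negRoots Φ Δ \ rootsIn Φ B := by
  have hneg : ∀ {γ}, γ ∈ rootsIn Φ B → -γ ∈ rootsIn Φ B := fun h => ⟨hΦ.neg_mem h.1, neg_mem h.2⟩
  have h := hΔ.add_mem_posRoots_diff_rootsIn hΦ hB (α := -α) (β := -β)
    ⟨⟨hΦ.neg_mem hα.1.1, hα.1.2⟩, fun h => hα.2 (by simpa using hneg h)⟩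
    (hβ.imp (fun h => ⟨hΦ.neg_mem h.1, h.2⟩) hneg) (by rw [← neg_add]; exact hΦ.neg_mem hαβ)
  rw [← neg_add] at h
  exact ⟨⟨hαβ, h.1.2⟩, fun h' => h.2 (hneg h')⟩

theorem mem_rootsIn_or_mem_rootsIn_diff (hI : I ⊆ Δ) (hK : K ⊆ Δ)
    (horth : OrthogonalSets I (K \ I)) (hα : α ∈ rootsIn Φ (I ∪ K)) :
    α ∈ rootsIn Φ I ∨ α ∈ rootsIn Φ (K \ I) := by
  refine (hΔ.mem_span_or_mem_span_of_orthogonalSets hΦ hI (Set.sdiff_subset.trans hK) horth hα.1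
    ?_).imp (⟨hα.1, ·⟩) (⟨hα.1, ·⟩)
  rw [Set.union_sdiff_self]
  exact hα.2

theorem rootsIn_union_posRoots_diff_eq (hI : I ⊆ Δ) (hK : K ⊆ Δ)
    (horth : OrthogonalSets I (K \ I)) :
    rootsIn Φ I ∪ (posRoots Φ Δ \ rootsIn Φ K) =
      rootsIn Φ I ∪ (posRoots Φ Δ \ rootsIn Φ (I ∪ K)) := by
  ext α
  refine ⟨?_, Or.imp_right fun h => ⟨h.1, fun h' => h.2 (rootsIn_mono Set.subset_union_right h')⟩⟩
  rintro (h | ⟨hpos, hαK⟩)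
  · exact Or.inl h
  by_cases hαIK : α ∈ rootsIn Φ (I ∪ K)
  · exact (hΔ.mem_rootsIn_or_mem_rootsIn_diff hΦ hI hK horth hαIK).imp_right
      fun h => absurd (rootsIn_mono Set.sdiff_subset h) hαK
  · exact Or.inr ⟨hpos, hαIK⟩

theorem diff_rootsIn_union_posRoots_diff_eq (hI : I ⊆ Δ) (hK : K ⊆ Δ)
    (horth : OrthogonalSets I (K \ I)) :
    Φ \ (rootsIn Φ I ∪ (posRoots Φ Δ \ rootsIn Φ K)) =
      rootsIn Φ (K \ I) ∪ (negRoots Φ Δ \ rootsIn Φ (I ∪ K)) := by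
  ext α
  constructor
  · rintro ⟨hα, hαΓ⟩
    rw [Set.mem_union, not_or] at hαΓ
    by_cases hαIK : α ∈ rootsIn Φ (I ∪ K)
    · exact Or.inl ((hΔ.mem_rootsIn_or_mem_rootsIn_diff hΦ hI hK horth hαIK).resolve_left hαΓ.1)
    · refine Or.inr ⟨⟨hα, (hΔ.pos_or_neg α hα).resolve_left fun h => hαΓ.2 ⟨⟨hα, h⟩, ?_⟩⟩, hαIK⟩
      exact fun h' => hαIK (rootsIn_mono Set.subset_union_right h')
  · rintro (h | ⟨hneg, hαIK⟩)
    · refine ⟨h.1, ?_⟩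
      rintro (h' | h')
      · exact Set.disjoint_left.1 (hΔ.disjoint_rootsIn hΦ hI (Set.sdiff_subset.trans hK)
          Set.disjoint_sdiff_right) h' h
      · exact h'.2 (rootsIn_mono Set.sdiff_subset h)
    · refine ⟨hneg.1, ?_⟩
      rintro (h' | h')
      · exact hαIK (rootsIn_mono Set.subset_union_left h')
      · exact Set.disjoint_left.1 (hΔ.disjoint_posRoots_negRoots hΦ) h'.1 hneg

theorem orthogonalSets_of_isClosedSubset_diff (hI : I ⊆ Δ) (hK : K ⊆ Δ)
    (hΓ : IsClosedSubset Φ (Φ \ (rootsIn Φ I ∪ (posRoots Φ Δ \ rootsIn Φ K)))) :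
    OrthogonalSets I (K \ I) := by
  set Γ := rootsIn Φ I ∪ (posRoots Φ Δ \ rootsIn Φ K)
  intro x hx y hy
  obtain ⟨i, rfl⟩ : ∃ i : Δ, (i : V) = x := ⟨⟨x, hI hx⟩, rfl⟩
  obtain ⟨j, rfl⟩ : ∃ j : Δ, (j : V) = y := ⟨⟨y, hK hy.1⟩, rfl⟩
  have hij : i ≠ j := fun h => hy.2 (by rwa [← h])
  by_contra hinner
  have hsum_j : (hΔ.basis hΦ.span_top).repr (i + j) j = 1 := by simp [repr_coe, hij]
  have hsumΦ : (i + j : V) ∈ Φ :=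
    hΦ.add_mem_of_inner_neg (hΔ.subset i.2) (hΔ.subset j.2)
      ((hΔ.inner_coe_nonpos hΦ hij).lt_of_ne hinner) fun h => by simp [h] at hsum_j
  have hsum_pos := hΔ.mem_posRoots_of_repr_pos hΦ hsumΦ (hsum_j ▸ one_pos)
  have hjI : (j : V) ∉ span ℝ I := fun h => hy.2 ((hΔ.coe_mem_span_iff hΦ.span_top hI j).1 h)
  have hsumΓ : -(i + j : V) ∈ Φ \ Γ := by
    refine ⟨hΦ.neg_mem hsumΦ, ?_⟩
    rintro (h | h)
    · exact hjI (by simpa using sub_mem (neg_mem h.2) (subset_span hx))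
    · exact Set.disjoint_left.1 (hΔ.disjoint_posRoots_negRoots hΦ) h.1
        ⟨h.1.1, by simpa using hsum_pos.2⟩
  have hjΓ : (j : V) ∈ Φ \ Γ := by
    refine ⟨hΔ.subset j.2, ?_⟩
    rintro (h | h)
    · exact hjI h.2
    · exact h.2 ⟨h.1.1, subset_span hy.1⟩
  have hnegi := hΓ _ hsumΓ _ hjΓ (by simpa using hΦ.neg_mem (hΔ.subset i.2))
  rw [neg_add, neg_add_cancel_right] at hnegi
  exact hnegi.2 (Or.inl ⟨hΦ.neg_mem (hΔ.subset i.2), neg_mem (subset_span hx)⟩)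

end

end IsBase

end

/-- For `I, K ⊆ Π`, the set `Γ(I,K) := Φ_I ∪ (Φ⁺ \ Φ_K)` is invertible
(both it and its complement in `Φ` are closed) if and only if `I` is orthogonal to `K \ I`. -/
theorem statement1 (Φ Δ : Set V) (hΦ : IsRootSystem Φ) (hΔ : IsBase Φ Δ)
    (I K : Set V) (hI : I ⊆ Δ) (hK : K ⊆ Δ) :
    (IsClosedSubset Φ (rootsIn Φ I ∪ (posRoots Φ Δ \ rootsIn Φ K)) ∧
      IsClosedSubset Φ (Φ \ (rootsIn Φ I ∪ (posRoots Φ Δ \ rootsIn Φ K)))) ↔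
      OrthogonalSets I (K \ I) := by
  refine ⟨fun h => hΔ.orthogonalSets_of_isClosedSubset_diff hΦ hI hK h.2, fun horth => ?_⟩
  rw [hΔ.diff_rootsIn_union_posRoots_diff_eq hΦ hI hK horth,
    hΔ.rootsIn_union_posRoots_diff_eq hΦ hI hK horth]
  have hIK : I ∪ K ⊆ Δ := Set.union_subset hI hK
  exact ⟨isClosedSubset_rootsIn_union_diff Set.subset_union_left
      fun _ hα _ hβ => hΔ.add_mem_posRoots_diff_rootsIn hΦ hIK hα hβ,
    isClosedSubset_rootsIn_union_diff (Set.sdiff_subset.trans Set.subset_union_right)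
      fun _ hα _ hβ => hΔ.add_mem_negRoots_diff_rootsIn hΦ hIK hα hβ⟩
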